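/- arXiv:1202.2931 — 2 statements merged into one kernel-verified Lean document; each statement's English description precedes it below -/
import Mathlib

section
/- With Φ and Ψ as above (Ψ(s) = Φ'(t) for s = 1/(Φ(t)Φ'(t))), the integral ∫_0 ds/(s·Ψ(s)) converges near 0. Specifically, under the change of variables s = 1/(Φ(t)Φ'(t)), the integral ∫_0 ds/(sΨ(s)) equals ∫^{+∞} (1/Φ(t) + Φ''(t)/Φ'(t)²) dt, which is finite when ∫^{+∞} dt/Φ(t) < ∞. -/
/-!
Since `Φ' > 0` and `Φ ≥ 0`, `Φ` is strictly increasing and positive on `(0, ∞)`, and `Φ'' ≥ 0`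
because `Φ'` is monotone. Hence `σ = 1 / (Φ Φ')` is strictly decreasing with
`|σ'| = (Φ'² + Φ Φ'') / (Φ Φ')²`, and the one-dimensional change of variables `s = σ t` turns
`ds / (s Ψ(s))` into `|σ' t| Φ Φ' / Φ' dt = (1 / Φ + Φ'' / Φ'²) dt`. The first term is integrable
by hypothesis away from `t₀` and by continuity near it; the second is the nonnegative derivative
of `-1 / Φ'`, which is increasing and bounded above by `0`.
-/

open Set MeasureTheory Filter Topology

lemma strictMonoOn_Ioi_of_hasDerivAt_pos {f f' : ℝ → ℝ} {a : ℝ}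
    (hf : ∀ x ∈ Ioi a, HasDerivAt f (f' x) x) (hf' : ∀ x ∈ Ioi a, 0 < f' x) :
    StrictMonoOn f (Ioi a) :=
  strictMonoOn_of_hasDerivWithinAt_pos (convex_Ioi a)
    (fun x hx => (hf x hx).continuousAt.continuousWithinAt)
    (by simpa only [interior_Ioi] using fun x hx => (hf x hx).hasDerivWithinAt)
    (by simpa only [interior_Ioi] using hf')

lemma monotoneOn_Ioi_of_hasDerivAt_nonneg {f f' : ℝ → ℝ} {a : ℝ}
    (hf : ∀ x ∈ Ioi a, HasDerivAt f (f' x) x) (hf' : ∀ x ∈ Ioi a, 0 ≤ f' x) :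
    MonotoneOn f (Ioi a) :=
  monotoneOn_of_hasDerivWithinAt_nonneg (convex_Ioi a)
    (fun x hx => (hf x hx).continuousAt.continuousWithinAt)
    (by simpa only [interior_Ioi] using fun x hx => (hf x hx).hasDerivWithinAt)
    (by simpa only [interior_Ioi] using hf')

lemma MonotoneOn.exists_tendsto_atTop {f : ℝ → ℝ} {a : ℝ} (hf : MonotoneOn f (Ioi a))
    (hbdd : BddAbove (f '' Ioi a)) : ∃ l, Tendsto f atTop (𝓝 l) := by
  set g : ℝ → ℝ := fun x => f (max x (a + 1))
  have hmem : ∀ x, max x (a + 1) ∈ Ioi a := fun x =>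
    lt_of_lt_of_le (lt_add_one a) (le_max_right _ _)
  have hg : Monotone g := fun x y hxy => hf (hmem x) (hmem y) (max_le_max hxy le_rfl)
  have hgbdd : BddAbove (range g) :=
    hbdd.mono (range_subset_iff.2 fun x => mem_image_of_mem f (hmem x))
  refine ⟨_, (tendsto_atTop_ciSup hg hgbdd).congr' ?_⟩
  filter_upwards [eventually_ge_atTop (a + 1)] with x hx
  simp only [g, max_eq_left hx]

lemma integrableOn_Ioi_deriv_of_nonneg_of_bddAbove {g g' : ℝ → ℝ} {a : ℝ}
    (hcont : ContinuousWithinAt g (Ici a) a) (hderiv : ∀ x ∈ Ioi a, HasDerivAt g (g' x) x)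
    (hg' : ∀ x ∈ Ioi a, 0 ≤ g' x) (hbdd : BddAbove (g '' Ioi a)) :
    IntegrableOn g' (Ioi a) :=
  have ⟨_, hlim⟩ := (monotoneOn_Ioi_of_hasDerivAt_nonneg hderiv hg').exists_tendsto_atTop hbdd
  integrableOn_Ioi_deriv_of_nonneg hcont hderiv hg' hlim

lemma hasDerivAt_one_div_mul {f g : ℝ → ℝ} {f' g' t : ℝ} (hf : HasDerivAt f f' t)
    (hg : HasDerivAt g g' t) (hfg : f t * g t ≠ 0) :
    HasDerivAt (fun u => 1 / (f u * g u)) (-((f' * g t + f t * g') / (f t * g t) ^ 2)) t := by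
  simpa only [one_div, neg_div] using (hf.fun_mul hg).fun_inv hfg

lemma strictAntiOn_one_div_mul {f g : ℝ → ℝ} {s : Set ℝ} (hf : StrictMonoOn f s)
    (hg : MonotoneOn g s) (hfpos : ∀ x ∈ s, 0 < f x) (hgpos : ∀ x ∈ s, 0 < g x) :
    StrictAntiOn (fun x => 1 / (f x * g x)) s := fun x hx y hy hxy =>
  one_div_lt_one_div_of_lt (mul_pos (hfpos x hx) (hgpos x hx))
    (mul_lt_mul (hf hx hy hxy) (hg hx hy hxy.le) (hgpos x hx) (hfpos y hy).le)

lemma abs_neg_div_mul_one_div_eq {a b c : ℝ} (ha : 0 < a) (hb : 0 < b) (hc : 0 ≤ c) :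
    |-((b * b + a * c) / (a * b) ^ 2)| * (1 / (1 / (a * b) * b)) = 1 / a + c / b ^ 2 := by
  rw [abs_neg, abs_of_nonneg (by positivity)]
  field_simp

lemma integrableOn_Ioi_of_continuousOn_Icc {f : ℝ → ℝ} {a b : ℝ} (hf : ContinuousOn f (Icc a b))
    (hb : IntegrableOn f (Ioi b)) : IntegrableOn f (Ioi a) :=
  ((hf.integrableOn_Icc.mono_set Ioc_subset_Icc_self).union hb).mono_set Ioi_subset_Ioc_union_Ioi

lemma integrableOn_Ioi_deriv_div_sq {f f' : ℝ → ℝ} {a : ℝ}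
    (hf : ∀ x ∈ Ici a, HasDerivAt f (f' x) x) (hfpos : ∀ x ∈ Ici a, 0 < f x)
    (hf' : ∀ x ∈ Ioi a, 0 ≤ f' x) :
    IntegrableOn (fun x => f' x / f x ^ 2) (Ioi a) := by
  have hderiv : ∀ x ∈ Ici a, HasDerivAt (fun u => -(f u)⁻¹) (f' x / f x ^ 2) x := fun x hx => by
    simpa only [neg_div, neg_neg] using ((hf x hx).fun_inv (hfpos x hx).ne').fun_neg
  refine integrableOn_Ioi_deriv_of_nonneg_of_bddAbove
    (hderiv a self_mem_Ici).continuousAt.continuousWithinAt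
    (fun x hx => hderiv x (mem_Ici_of_Ioi hx)) (fun x hx => ?_) ⟨0, ?_⟩
  · have := hfpos x (mem_Ici_of_Ioi hx)
    have := hf' x hx
    positivity
  · rintro _ ⟨x, hx, rfl⟩
    exact neg_nonpos.2 (inv_nonneg.2 (hfpos x (mem_Ici_of_Ioi hx)).le)

lemma integrableOn_Ioi_one_div_add_div_sq {Φ Φ' Φ'' : ℝ → ℝ} {t₀ b : ℝ} (ht₀ : 0 < t₀)
    (hΦderiv : ∀ t ∈ Ioi (0:ℝ), HasDerivAt Φ (Φ' t) t) (hΦpos : ∀ t ∈ Ioi (0:ℝ), 0 < Φ t)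
    (hΦ'deriv : ∀ t ∈ Ioi (0:ℝ), HasDerivAt Φ' (Φ'' t) t) (hΦ'pos : ∀ t ∈ Ioi (0:ℝ), 0 < Φ' t)
    (hΦ'' : ∀ t ∈ Ioi (0:ℝ), 0 ≤ Φ'' t) (hΦint : IntegrableOn (fun t => 1 / Φ t) (Ioi b)) :
    IntegrableOn (fun t => 1 / Φ t + Φ'' t / Φ' t ^ 2) (Ioi t₀) := by
  have hIci : Ici t₀ ⊆ Ioi 0 := Ici_subset_Ioi.2 ht₀
  refine (integrableOn_Ioi_of_continuousOn_Icc ?_ hΦint).add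
    (integrableOn_Ioi_deriv_div_sq (fun x hx => hΦ'deriv x (hIci hx))
      (fun x hx => hΦ'pos x (hIci hx)) (fun x hx => hΦ'' x (hIci (mem_Ici_of_Ioi hx))))
  exact continuousOn_const.div
    (fun x hx => (hΦderiv x (hIci hx.1)).continuousAt.continuousWithinAt)
    (fun x hx => (hΦpos x (hIci hx.1)).ne')

lemma integrableOn_image_and_setIntegral_image_eq {σ σ' F G : ℝ → ℝ} {s : Set ℝ}
    (hs : MeasurableSet s) (hσ : ∀ t ∈ s, HasDerivWithinAt σ (σ' t) s t) (hinj : InjOn σ s)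
    (hjac : ∀ t ∈ s, |σ' t| * F (σ t) = G t) (hG : IntegrableOn G s) :
    IntegrableOn F (σ '' s) ∧ ∫ x in σ '' s, F x = ∫ t in s, G t := by
  refine ⟨?_, ?_⟩
  · rw [integrableOn_image_iff_integrableOn_abs_deriv_smul hs hσ hinj]
    exact hG.congr_fun (fun t ht => (hjac t ht).symm) hs
  · rw [integral_image_eq_integral_abs_deriv_smul hs hσ hinj]
    exact setIntegral_congr_fun hs hjac

theorem stmt1_general
    (Φ Φ' Φ'' Ψ : ℝ → ℝ)
    (hΦnonneg : ∀ t ∈ Ici (0:ℝ), 0 ≤ Φ t)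
    (hΦderiv : ∀ t ∈ Ioi (0:ℝ), HasDerivAt Φ (Φ' t) t)
    (hΦ'deriv : ∀ t ∈ Ioi (0:ℝ), HasDerivAt Φ' (Φ'' t) t)
    (hΦ'pos : ∀ t ∈ Ioi (0:ℝ), 0 < Φ' t)
    (hΦ'mono : MonotoneOn Φ' (Ioi 0))
    (hΦint : IntegrableOn (fun t => 1 / Φ t) (Ioi 1))
    (σ : ℝ → ℝ) (hσ : ∀ t ∈ Ioi (0:ℝ), σ t = 1 / (Φ t * Φ' t))
    (hΨ : ∀ t ∈ Ioi (0:ℝ), Ψ (σ t) = Φ' t)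
    (t₀ : ℝ) (ht₀ : 0 < t₀) :
    IntegrableOn (fun s => 1 / (s * Ψ s)) (σ '' Ioi t₀) ∧
    (∫ s in σ '' Ioi t₀, 1 / (s * Ψ s)) =
      ∫ t in Ioi t₀, (1 / Φ t + Φ'' t / (Φ' t) ^ 2) ∧
    IntegrableOn (fun t => 1 / Φ t + Φ'' t / (Φ' t) ^ 2) (Ioi t₀) := by
  have hsub : Ioi t₀ ⊆ Ioi 0 := Ioi_subset_Ioi ht₀.le
  have hΦmono : StrictMonoOn Φ (Ioi 0) := strictMonoOn_Ioi_of_hasDerivAt_pos hΦderiv hΦ'pos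
  have hΦpos : ∀ t ∈ Ioi (0:ℝ), 0 < Φ t := fun t ht =>
    (hΦnonneg _ (mem_Ici.2 (half_pos ht).le)).trans_lt
      (hΦmono (mem_Ioi.2 (half_pos ht)) ht (half_lt_self ht))
  have hΦ'' : ∀ t ∈ Ioi (0:ℝ), 0 ≤ Φ'' t := fun t ht =>
    (hΦ'deriv t ht).hasDerivWithinAt.nonneg_of_monotoneOn (isOpen_Ioi.preperfect t ht) hΦ'mono
  have hσeq : EqOn (fun t => 1 / (Φ t * Φ' t)) σ (Ioi t₀) := fun t ht => (hσ t (hsub ht)).symm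
  have hσderiv : ∀ t ∈ Ioi t₀, HasDerivWithinAt σ
      (-((Φ' t * Φ' t + Φ t * Φ'' t) / (Φ t * Φ' t) ^ 2)) (Ioi t₀) t := fun t ht =>
    (hasDerivAt_one_div_mul (hΦderiv t (hsub ht)) (hΦ'deriv t (hsub ht))
      (mul_pos (hΦpos t (hsub ht)) (hΦ'pos t (hsub ht))).ne').hasDerivWithinAt.congr
      (fun u hu => (hσeq hu).symm) (hσeq ht).symm
  have hσinj : InjOn σ (Ioi t₀) :=
    ((strictAntiOn_one_div_mul hΦmono hΦ'mono hΦpos hΦ'pos).injOn.mono hsub).congr hσeq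
  have hjac : ∀ t ∈ Ioi t₀, |-((Φ' t * Φ' t + Φ t * Φ'' t) / (Φ t * Φ' t) ^ 2)| *
      (1 / (σ t * Ψ (σ t))) = 1 / Φ t + Φ'' t / Φ' t ^ 2 := fun t ht => by
    rw [hΨ t (hsub ht), hσ t (hsub ht)]
    exact abs_neg_div_mul_one_div_eq (hΦpos t (hsub ht)) (hΦ'pos t (hsub ht)) (hΦ'' t (hsub ht))
  have hint : IntegrableOn (fun t => 1 / Φ t + Φ'' t / Φ' t ^ 2) (Ioi t₀) :=
    integrableOn_Ioi_one_div_add_div_sq ht₀ hΦderiv hΦpos hΦ'deriv hΦ'pos hΦ'' hΦint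
  obtain ⟨hF, heq⟩ := integrableOn_image_and_setIntegral_image_eq (F := fun s => 1 / (s * Ψ s))
    measurableSet_Ioi hσderiv hσinj hjac hint
  exact ⟨hF, heq, hint⟩

/-- With Φ a twice-differentiable Young function with
∫^∞ dt/Φ(t) < ∞ and Ψ defined by Ψ(s) = Φ'(t) for s = σ(t) = 1/(Φ(t)Φ'(t)),
the integral ∫_0 ds/(s·Ψ(s)) converges near 0 and, under the change of
variables s = σ(t), equals ∫_{t₀}^∞ (1/Φ(t) + Φ''(t)/Φ'(t)²) dt, which is
finite. -/
theorem stmt1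
    (Φ Φ' Φ'' Ψ : ℝ → ℝ)
    (hΦcont : ContinuousOn Φ (Ici 0))
    (hΦnonneg : ∀ t ∈ Ici (0:ℝ), 0 ≤ Φ t)
    (hΦmono : MonotoneOn Φ (Ici 0))
    (hΦconv : ConvexOn ℝ (Ici 0) Φ)
    (hΦ0 : Φ 0 = 0)
    (hΦderiv : ∀ t ∈ Ioi (0:ℝ), HasDerivAt Φ (Φ' t) t)
    (hΦ'deriv : ∀ t ∈ Ioi (0:ℝ), HasDerivAt Φ' (Φ'' t) t)
    (hΦ'pos : ∀ t ∈ Ioi (0:ℝ), 0 < Φ' t)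
    (hΦ'mono : MonotoneOn Φ' (Ioi 0))
    (hΦint : IntegrableOn (fun t => 1 / Φ t) (Ioi 1))
    (σ : ℝ → ℝ) (hσ : ∀ t ∈ Ioi (0:ℝ), σ t = 1 / (Φ t * Φ' t))
    (hΨ : ∀ t ∈ Ioi (0:ℝ), Ψ (σ t) = Φ' t)
    (t₀ : ℝ) (ht₀ : 0 < t₀) :
    IntegrableOn (fun s => 1 / (s * Ψ s)) (σ '' Ioi t₀) ∧
    (∫ s in σ '' Ioi t₀, 1 / (s * Ψ s)) =
      ∫ t in Ioi t₀, (1 / Φ t + Φ'' t / (Φ' t) ^ 2) ∧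
    IntegrableOn (fun t => 1 / Φ t + Φ'' t / (Φ' t) ^ 2) (Ioi t₀) :=
  stmt1_general Φ Φ' Φ'' Ψ hΦnonneg hΦderiv hΦ'deriv hΦ'pos hΦ'mono hΦint σ hσ hΨ t₀ ht₀
end

section
/- Let φ: (0,1] → ℝ₊ be increasing with s ↦ φ(s)/s decreasing (equivalently sφ'(s) ≤ φ(s)), and assume ∫_0 ds/φ(s) < ∞. Define T(A,N) = N·∫_0^{N/A} ds/φ(s) for A ∈ [1,2], N ∈ [0,1]. Then T is a convex function of (A,N) on this domain; moreover its Hessian has determinant zero, i.e. T is degenerate-convex, being linear along the rays A/N = const. -/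
open Set MeasureTheory

private lemma ftc_aux (φ : ℝ → ℝ)
    (hφint : IntegrableOn (fun s => 1 / φ s) (Ioo 0 1))
    (x : ℝ) (hx : x ∈ Ioo (0:ℝ) 1) (hcont : ContinuousAt φ x) (hne : φ x ≠ 0) :
    HasDerivAt (fun y => ∫ s in Ioo (0:ℝ) y, 1 / φ s) (1 / φ x) x := by
  have hint : IntervalIntegrable (fun s => 1 / φ s) volume 0 x := by
    rw [intervalIntegrable_iff_integrableOn_Ioc_of_le hx.1.le]
    exact hφint.mono_set (fun s hs => ⟨hs.1, hs.2.trans_lt hx.2⟩)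
  have hmeas : StronglyMeasurableAtFilter (fun s => 1 / φ s) (nhds x) volume :=
    ⟨Ioo 0 1, Ioo_mem_nhds hx.1 hx.2, hφint.aestronglyMeasurable⟩
  have hc : ContinuousAt (fun s => 1 / φ s) x := continuousAt_const.div hcont hne
  have key := intervalIntegral.integral_hasDerivAt_right hint hmeas hc
  apply key.congr_of_eventuallyEq
  filter_upwards [Ioi_mem_nhds hx.1] with y hy
  rw [intervalIntegral.integral_of_le (le_of_lt hy), integral_Ioc_eq_integral_Ioo]

/-- with φ : (0,1] → ℝ₊ increasing, φ(s)/s decreasing and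
∫_0 ds/φ(s) < ∞, the function T(A,N) = N·∫_0^{N/A} ds/φ(s) is convex on
{(A,N) : 1 ≤ A ≤ 2, 0 ≤ N ≤ 1}; moreover its Hessian has determinant zero:
T_AA·T_NN − T_AN² = 0 at interior points. -/
theorem stmt5
    (φ : ℝ → ℝ)
    (hφpos : ∀ s ∈ Ioc (0:ℝ) 1, 0 < φ s)
    (hφmono : MonotoneOn φ (Ioc 0 1))
    (hφdiff : ∀ s ∈ Ioo (0:ℝ) 1, DifferentiableAt ℝ φ s)
    (hratio : AntitoneOn (fun s => φ s / s) (Ioc 0 1))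
    (hφint : IntegrableOn (fun s => 1 / φ s) (Ioo 0 1))
    (T : ℝ → ℝ → ℝ)
    (hT : ∀ A N, T A N = N * ∫ s in Ioo (0:ℝ) (N / A), 1 / φ s) :
    ConvexOn ℝ (Icc (1:ℝ) 2 ×ˢ Icc (0:ℝ) 1) (fun p => T p.1 p.2) ∧
    ∀ A N, 1 < A → A < 2 → 0 < N → N < 1 →
      deriv (fun a => deriv (fun a' => T a' N) a) A *
        deriv (fun n => deriv (fun n' => T A n') n) N =
      (deriv (fun a => deriv (fun n => T a n) N) A) ^ 2 := by
  set F : ℝ → ℝ := fun x => ∫ s in Ioo (0:ℝ) x, 1 / φ s with hFdef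
  have hTF : ∀ a n, T a n = n * F (n / a) := hT
  have hFderiv : ∀ x ∈ Ioo (0:ℝ) 1, HasDerivAt F (1 / φ x) x := fun x hx =>
    ftc_aux φ hφint x hx (hφdiff x hx).continuousAt (hφpos x ⟨hx.1, hx.2.le⟩).ne'
  refine ⟨?_, ?_⟩
  · -- convexity
    set G : ℝ → ℝ := fun x => x * F x with hGdef
    -- integrability on Icc
    have hIcc : IntegrableOn (fun s => 1 / φ s) (Icc 0 1) :=
      (integrableOn_Icc_iff_integrableOn_Ioo).mpr hφint
    -- continuity of F
    have hFcont : ContinuousOn F (Icc 0 1) := by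
      have h := intervalIntegral.continuousOn_primitive (f := fun s => 1 / φ s)
        (a := (0:ℝ)) (b := 1) (μ := volume) hIcc
      exact h.congr fun x _ => (integral_Ioc_eq_integral_Ioo).symm
    -- monotonicity of F on Ioo 0 1
    have hnonneg : ∀ u ∈ Ioc (0:ℝ) 1, 0 ≤ 1 / φ u := fun u hu =>
      le_of_lt (one_div_pos.mpr (hφpos u hu))
    have hII : ∀ a b : ℝ, 0 ≤ a → a ≤ b → b ≤ 1 →
        IntervalIntegrable (fun s => 1 / φ s) volume a b := by
      intro a b ha hab hb1
      rw [intervalIntegrable_iff_integrableOn_Ioc_of_le hab]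
      exact hIcc.mono_set (fun s hs => ⟨ha.trans hs.1.le, hs.2.trans hb1⟩)
    have hFint : ∀ z : ℝ, 0 ≤ z → z ≤ 1 → F z = ∫ s in (0:ℝ)..z, 1 / φ s := by
      intro z hz _
      rw [intervalIntegral.integral_of_le hz, integral_Ioc_eq_integral_Ioo]
    have hFmono : MonotoneOn F (Ioo 0 1) := by
      intro x hx y hy hxy
      have hadd := intervalIntegral.integral_add_adjacent_intervals
        (hII 0 x le_rfl hx.1.le hx.2.le) (hII x y hx.1.le hxy hy.2.le)
      have hnn : 0 ≤ ∫ s in x..y, 1 / φ s :=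
        intervalIntegral.integral_nonneg hxy (fun u hu =>
          hnonneg u ⟨hx.1.trans_le hu.1, hu.2.trans hy.2.le⟩)
      rw [hFint x hx.1.le hx.2.le, hFint y hy.1.le hy.2.le]
      linarith
    -- monotonicity of x * (1/φ x)
    have hxφ : MonotoneOn (fun x => x * (1 / φ x)) (Ioo 0 1) := by
      intro x hx y hy hxy
      have hx1 : x ∈ Ioc (0:ℝ) 1 := ⟨hx.1, hx.2.le⟩
      have hy1 : y ∈ Ioc (0:ℝ) 1 := ⟨hy.1, hy.2.le⟩
      have hpx := hφpos x hx1
      have hpy := hφpos y hy1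
      have h := hratio hx1 hy1 hxy
      rw [div_le_div_iff₀ hy.1 hx.1] at h
      simp only [mul_one_div]
      rw [div_le_div_iff₀ hpx hpy]
      nlinarith
    -- derivative of G
    have hGderiv : ∀ x ∈ Ioo (0:ℝ) 1, HasDerivAt G (F x + x * (1 / φ x)) x := by
      intro x hx
      exact ((hasDerivAt_id x).mul (hFderiv x hx)).congr_deriv (by simp)
    have hGconv : ConvexOn ℝ (Icc (0:ℝ) 1) G := by
      apply MonotoneOn.convexOn_of_deriv (convex_Icc 0 1)
      · exact continuousOn_id.mul hFcont
      · rw [interior_Icc]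
        exact fun x hx => (hGderiv x hx).differentiableAt.differentiableWithinAt
      · rw [interior_Icc]
        intro x hx y hy hxy
        rw [(hGderiv x hx).deriv, (hGderiv y hy).deriv]
        exact add_le_add (hFmono hx hy hxy) (hxφ hx hy hxy)
    -- perspective
    have hTG : ∀ A N : ℝ, 0 < A → T A N = A * G (N / A) := by
      intro A N hA
      rw [hTF]
      show N * F (N / A) = A * (N / A * F (N / A))
      field_simp
    constructor
    · exact (convex_Icc (1:ℝ) 2).prod (convex_Icc (0:ℝ) 1)
    intro p hp q hq a b ha hb hab
    simp only [Set.mem_prod, Set.mem_Icc] at hp hq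
    obtain ⟨⟨hA1l, hA1r⟩, hN1l, hN1r⟩ := hp
    obtain ⟨⟨hA2l, hA2r⟩, hN2l, hN2r⟩ := hq
    set A1 := p.1; set N1 := p.2; set A2 := q.1; set N2 := q.2
    have hA1 : (0:ℝ) < A1 := lt_of_lt_of_le one_pos hA1l
    have hA2 : (0:ℝ) < A2 := lt_of_lt_of_le one_pos hA2l
    have hA : (0:ℝ) < a * A1 + b * A2 := by nlinarith
    have hcomb1 : (a • p + b • q).1 = a * A1 + b * A2 := rfl
    have hcomb2 : (a • p + b • q).2 = a * N1 + b * N2 := rfl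
    simp only [smul_eq_mul]
    rw [hcomb1, hcomb2, hTG _ _ hA, hTG _ _ hA1, hTG _ _ hA2]
    set A := a * A1 + b * A2 with hAdef
    have hw1 : (0:ℝ) ≤ a * A1 / A := by positivity
    have hw2 : (0:ℝ) ≤ b * A2 / A := by positivity
    have hwsum : a * A1 / A + b * A2 / A = 1 := by
      field_simp
      exact hAdef.symm
    have hx1 : N1 / A1 ∈ Icc (0:ℝ) 1 :=
      ⟨div_nonneg hN1l hA1.le, div_le_one_of_le₀ (hN1r.trans hA1l) hA1.le⟩
    have hx2 : N2 / A2 ∈ Icc (0:ℝ) 1 :=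
      ⟨div_nonneg hN2l hA2.le, div_le_one_of_le₀ (hN2r.trans hA2l) hA2.le⟩
    have key := hGconv.2 hx1 hx2 hw1 hw2 hwsum
    simp only [smul_eq_mul] at key
    have harg : a * A1 / A * (N1 / A1) + b * A2 / A * (N2 / A2) = (a * N1 + b * N2) / A := by
      field_simp
    rw [harg] at key
    calc A * G ((a * N1 + b * N2) / A)
        ≤ A * (a * A1 / A * G (N1 / A1) + b * A2 / A * G (N2 / A2)) := by
          exact mul_le_mul_of_nonneg_left key hA.le
      _ = a * (A1 * G (N1 / A1)) + b * (A2 * G (N2 / A2)) := by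
          field_simp

  · -- determinant identity
    intro A N hA1 hA2 hN0 hN1
    have hA0 : (0:ℝ) < A := lt_trans one_pos hA1
    have hmem : ∀ n a : ℝ, 0 < n → n < a → n / a ∈ Ioo (0:ℝ) 1 := fun n a hn hna =>
      ⟨div_pos hn (hn.trans hna), (div_lt_one (hn.trans hna)).mpr hna⟩
    have hu : N / A ∈ Ioo (0:ℝ) 1 := hmem N A hN0 (hN1.trans hA1)
    set u := N / A with hudef
    set P := φ u with hPdef
    set D := deriv φ u with hDdef
    have hP : 0 < P := hφpos u ⟨hu.1, hu.2.le⟩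
    have hD : HasDerivAt φ D u := (hφdiff u hu).hasDerivAt
    -- inner derivative in N: for a ∈ Ioo 1 2, n ∈ Ioo 0 1
    have inner_N : ∀ a ∈ Ioo (1:ℝ) 2, ∀ n ∈ Ioo (0:ℝ) 1,
        HasDerivAt (fun n' => T a n') (F (n / a) + n / (a * φ (n / a))) n := by
      intro a ha n hn
      have ha0 : (0:ℝ) < a := lt_trans one_pos ha.1
      have hna : n / a ∈ Ioo (0:ℝ) 1 := hmem n a hn.1 (hn.2.trans ha.1)
      have hpa : 0 < φ (n / a) := hφpos _ ⟨hna.1, hna.2.le⟩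
      have h1 : HasDerivAt (fun n' : ℝ => n' / a) (1 / a) n := (hasDerivAt_id n).div_const a
      have h2 : HasDerivAt (fun n' => F (n' / a)) (1 / φ (n / a) * (1 / a)) n :=
        by have := (hFderiv (n / a) hna).comp n h1; exact this
      have h3 := (hasDerivAt_id n).mul h2
      have hfun : (fun n' => T a n') = fun n' => n' * F (n' / a) := funext fun n' => hTF a n'
      rw [hfun]
      refine h3.congr_deriv ?_
      simp only [id_eq]
      field_simp
    -- inner derivative in A: for a ∈ Ioo N 2 with a > 0
    have inner_A : ∀ a, N < a → a < 2 →
        HasDerivAt (fun a' => T a' N) (-(N ^ 2) / (a ^ 2 * φ (N / a))) a := by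
      intro a hNa ha2
      have ha0 : (0:ℝ) < a := hN0.trans hNa
      have hna : N / a ∈ Ioo (0:ℝ) 1 := hmem N a hN0 hNa
      have hpa : 0 < φ (N / a) := hφpos _ ⟨hna.1, hna.2.le⟩
      have h1 : HasDerivAt (fun a' : ℝ => N / a') (-(N / a ^ 2)) a := by
        simpa [div_eq_mul_inv] using (hasDerivAt_inv ha0.ne').const_mul N
      have h2 : HasDerivAt (fun a' => F (N / a')) (1 / φ (N / a) * -(N / a ^ 2)) a :=
        (hFderiv (N / a) hna).comp a h1
      have h3 := h2.const_mul N
      have hfun : (fun a' => T a' N) = fun a' => N * F (N / a') := funext fun a' => hTF a' N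
      rw [hfun]
      refine h3.congr_deriv ?_
      field_simp
    -- second derivative in N
    have hg1 : HasDerivAt (fun n => F (n / A) + n / (A * φ (n / A)))
        ((2 * A * P - N * D) / (A ^ 2 * P ^ 2)) N := by
      have h1 : HasDerivAt (fun n : ℝ => n / A) (1 / A) N := (hasDerivAt_id N).div_const A
      have h2 : HasDerivAt (fun n => F (n / A)) (1 / P * (1 / A)) N := by have := (hFderiv u hu).comp N h1; exact this
      have hφc : HasDerivAt (fun n => φ (n / A)) (D * (1 / A)) N := hD.comp N h1
      have hden : HasDerivAt (fun n => A * φ (n / A)) (A * (D * (1 / A))) N := hφc.const_mul A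
      have hdne : A * P ≠ 0 := by positivity
      have h3 := (hasDerivAt_id N).div hden hdne
      have h4 := h2.add h3
      refine h4.congr_deriv ?_
      simp only [id_eq, ← hudef, ← hPdef]
      field_simp
      ring
    -- second derivative in A
    have hg2 : HasDerivAt (fun a => -(N ^ 2) / (a ^ 2 * φ (N / a)))
        (N ^ 2 * (2 * A * P - N * D) / (A ^ 4 * P ^ 2)) A := by
      have h1 : HasDerivAt (fun a' : ℝ => N / a') (-(N / A ^ 2)) A := by
        simpa [div_eq_mul_inv] using (hasDerivAt_inv hA0.ne').const_mul N
      have hφc : HasDerivAt (fun a => φ (N / a)) (D * -(N / A ^ 2)) A := hD.comp A h1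
      have hsq : HasDerivAt (fun a : ℝ => a ^ 2) (2 * A) A := by
        simpa using hasDerivAt_pow 2 A
      have hden : HasDerivAt (fun a => a ^ 2 * φ (N / a))
          (2 * A * P + A ^ 2 * (D * -(N / A ^ 2))) A := hsq.mul hφc
      have hdne : A ^ 2 * P ≠ 0 := by positivity
      have h3 := (hasDerivAt_const A (-(N ^ 2))).div hden hdne
      refine h3.congr_deriv ?_
      simp only [id_eq, ← hudef, ← hPdef]
      field_simp
      ring
    -- mixed second derivative
    have hg3 : HasDerivAt (fun a => F (N / a) + N / (a * φ (N / a)))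
        (-(N * (2 * A * P - N * D)) / (A ^ 3 * P ^ 2)) A := by
      have h1 : HasDerivAt (fun a' : ℝ => N / a') (-(N / A ^ 2)) A := by
        simpa [div_eq_mul_inv] using (hasDerivAt_inv hA0.ne').const_mul N
      have h2 : HasDerivAt (fun a => F (N / a)) (1 / P * -(N / A ^ 2)) A :=
        by have := (hFderiv u hu).comp A h1; exact this
      have hφc : HasDerivAt (fun a => φ (N / a)) (D * -(N / A ^ 2)) A := hD.comp A h1
      have hden : HasDerivAt (fun a => a * φ (N / a)) (1 * P + A * (D * -(N / A ^ 2))) A :=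
        (hasDerivAt_id A).mul hφc
      have hdne : A * P ≠ 0 := by positivity
      have h3 := (hasDerivAt_const A N).div hden hdne
      have h4 := h2.add h3
      refine h4.congr_deriv ?_
      simp only [id_eq, ← hudef, ← hPdef]
      field_simp
      ring
    -- assemble: rewrite the three outer derivs
    have eAA : deriv (fun a => deriv (fun a' => T a' N) a) A
        = N ^ 2 * (2 * A * P - N * D) / (A ^ 4 * P ^ 2) := by
      have hev : (fun a => deriv (fun a' => T a' N) a)
          =ᶠ[nhds A] fun a => -(N ^ 2) / (a ^ 2 * φ (N / a)) := by
        filter_upwards [Ioo_mem_nhds (hN1.trans hA1 : N < A) hA2] with a ha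
        exact (inner_A a ha.1 ha.2).deriv
      rw [hev.deriv_eq]
      exact hg2.deriv
    have eNN : deriv (fun n => deriv (fun n' => T A n') n) N
        = (2 * A * P - N * D) / (A ^ 2 * P ^ 2) := by
      have hev : (fun n => deriv (fun n' => T A n') n)
          =ᶠ[nhds N] fun n => F (n / A) + n / (A * φ (n / A)) := by
        filter_upwards [Ioo_mem_nhds hN0 hN1] with n hn
        exact (inner_N A ⟨hA1, hA2⟩ n hn).deriv
      rw [hev.deriv_eq]
      exact hg1.deriv
    have eAN : deriv (fun a => deriv (fun n => T a n) N) A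
        = -(N * (2 * A * P - N * D)) / (A ^ 3 * P ^ 2) := by
      have hev : (fun a => deriv (fun n => T a n) N)
          =ᶠ[nhds A] fun a => F (N / a) + N / (a * φ (N / a)) := by
        filter_upwards [Ioo_mem_nhds hA1 hA2] with a ha
        exact (inner_N a ha N ⟨hN0, hN1⟩).deriv
      rw [hev.deriv_eq]
      exact hg3.deriv
    rw [eAA, eNN, eAN]
    field_simp
end
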